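/- arXiv:1701.05783 — 2 statements merged into one kernel-verified Lean document; each statement's English description precedes it below -/
import Mathlib

section
/- The function I_{a3} = (x p_y − y p_x)^2 + 2 k_2 (y/x)^2 + 2 k_3 (x/y)^2 Poisson-commutes with the Euclidean Hamiltonian H_a = (1/2)(p_x^2+p_y^2) + (1/2)k_1(x^2+y^2) + k_2/x^2 + k_3/y^2 on the set where x ≠ 0 and y ≠ 0. -/
/-!
Both `H_a` and `I_{a3}` are, in each coordinate separately, of the form `a t² + b t + c + d / t²`,
so all eight partial derivatives are explicit rational functions and the bracket
`H_x I_{p_x} + H_y I_{p_y} - H_{p_x} I_x - H_{p_y} I_y` cancels identically once `x, y ≠ 0`.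
-/

/-- Canonical Poisson bracket on phase space ℝ² × ℝ² with coordinates (x,y,pₓ,p_y). -/
noncomputable def pb (F G : ℝ → ℝ → ℝ → ℝ → ℝ) (x y px py : ℝ) : ℝ :=
    deriv (fun t => F t y px py) x * deriv (fun t => G x y t py) px
  + deriv (fun t => F x t px py) y * deriv (fun t => G x y px t) py
  - deriv (fun t => F x y t py) px * deriv (fun t => G t y px py) x
  - deriv (fun t => F x y px t) py * deriv (fun t => G x t px py) y

theorem pb_eq_of_hasDerivAt {F G : ℝ → ℝ → ℝ → ℝ → ℝ}
    {x y px py Fx Fy Fpx Fpy Gx Gy Gpx Gpy : ℝ}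
    (hFx : HasDerivAt (F · y px py) Fx x) (hFy : HasDerivAt (F x · px py) Fy y)
    (hFpx : HasDerivAt (F x y · py) Fpx px) (hFpy : HasDerivAt (F x y px ·) Fpy py)
    (hGx : HasDerivAt (G · y px py) Gx x) (hGy : HasDerivAt (G x · px py) Gy y)
    (hGpx : HasDerivAt (G x y · py) Gpx px) (hGpy : HasDerivAt (G x y px ·) Gpy py) :
    pb F G x y px py = Fx * Gpx + Fy * Gpy - Fpx * Gx - Fpy * Gy := by
  simp only [pb, hFx.deriv, hFy.deriv, hFpx.deriv, hFpy.deriv, hGx.deriv, hGy.deriv,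
    hGpx.deriv, hGpy.deriv]

theorem hasDerivAt_quadratic (a b c x : ℝ) :
    HasDerivAt (fun t => a * t ^ 2 + b * t + c) (2 * a * x + b) x := by
  have h := (((hasDerivAt_pow 2 x).const_mul a).add ((hasDerivAt_id x).const_mul b)).add_const c
  refine h.congr_deriv ?_
  push_cast
  ring

theorem hasDerivAt_quadratic_add_div_sq (a b c d : ℝ) {x : ℝ} (hx : x ≠ 0) :
    HasDerivAt (fun t => a * t ^ 2 + b * t + c + d / t ^ 2) (2 * a * x + b - 2 * d / x ^ 3) x := by
  have h := (hasDerivAt_quadratic a b c x).add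
    ((hasDerivAt_const x d).div (hasDerivAt_pow 2 x) (pow_ne_zero 2 hx))
  refine h.congr_deriv ?_
  field_simp
  ring

/-- The Hamiltonian `H_a` of the paper. -/
noncomputable def hamiltonianA (k1 k2 k3 : ℝ) (x y px py : ℝ) : ℝ :=
  (1/2)*(px^2 + py^2) + (1/2)*k1*(x^2+y^2) + k2/x^2 + k3/y^2

/-- The integral `I_{a3}` of the paper. -/
noncomputable def integralA3 (k2 k3 : ℝ) (x y px py : ℝ) : ℝ :=
  (x*py - y*px)^2 + 2*k2*(y/x)^2 + 2*k3*(x/y)^2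

section PartialDerivatives

variable (k1 k2 k3 x y px py : ℝ)

theorem hasDerivAt_hamiltonianA_x (hx : x ≠ 0) :
    HasDerivAt (hamiltonianA k1 k2 k3 · y px py) (k1 * x - 2 * k2 / x ^ 3) x := by
  convert hasDerivAt_quadratic_add_div_sq (k1 / 2) 0 ((px^2 + py^2) / 2 + k1 * y^2 / 2 + k3 / y^2)
    k2 hx using 1
  · funext t; unfold hamiltonianA; ring
  · ring

theorem hasDerivAt_hamiltonianA_y (hy : y ≠ 0) :
    HasDerivAt (hamiltonianA k1 k2 k3 x · px py) (k1 * y - 2 * k3 / y ^ 3) y := by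
  convert hasDerivAt_quadratic_add_div_sq (k1 / 2) 0 ((px^2 + py^2) / 2 + k1 * x^2 / 2 + k2 / x^2)
    k3 hy using 1
  · funext t; unfold hamiltonianA; ring
  · ring

theorem hasDerivAt_hamiltonianA_px :
    HasDerivAt (hamiltonianA k1 k2 k3 x y · py) px px := by
  convert hasDerivAt_quadratic (1 / 2) 0 (py^2 / 2 + k1 * (x^2 + y^2) / 2 + k2 / x^2 + k3 / y^2)
    px using 1
  · funext t; unfold hamiltonianA; ring
  · ring

theorem hasDerivAt_hamiltonianA_py :
    HasDerivAt (hamiltonianA k1 k2 k3 x y px ·) py py := by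
  convert hasDerivAt_quadratic (1 / 2) 0 (px^2 / 2 + k1 * (x^2 + y^2) / 2 + k2 / x^2 + k3 / y^2)
    py using 1
  · funext t; unfold hamiltonianA; ring
  · ring

theorem hasDerivAt_integralA3_x (hx : x ≠ 0) :
    HasDerivAt (integralA3 k2 k3 · y px py)
      (2 * (x * py - y * px) * py - 4 * k2 * y ^ 2 / x ^ 3 + 4 * k3 * x / y ^ 2) x := by
  convert hasDerivAt_quadratic_add_div_sq (py^2 + 2 * k3 / y^2) (-2 * y * px * py) (y^2 * px^2)
    (2 * k2 * y^2) hx using 1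
  · funext t; unfold integralA3; ring
  · ring

theorem hasDerivAt_integralA3_y (hy : y ≠ 0) :
    HasDerivAt (integralA3 k2 k3 x · px py)
      (-2 * (x * py - y * px) * px + 4 * k2 * y / x ^ 2 - 4 * k3 * x ^ 2 / y ^ 3) y := by
  convert hasDerivAt_quadratic_add_div_sq (px^2 + 2 * k2 / x^2) (-2 * x * px * py) (x^2 * py^2)
    (2 * k3 * x^2) hy using 1
  · funext t; unfold integralA3; ring
  · ring

theorem hasDerivAt_integralA3_px :
    HasDerivAt (integralA3 k2 k3 x y · py) (-2 * (x * py - y * px) * y) px := by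
  convert hasDerivAt_quadratic (y^2) (-2 * x * y * py) (x^2 * py^2 + 2 * k2 * (y/x)^2
    + 2 * k3 * (x/y)^2) px using 1
  · funext t; unfold integralA3; ring
  · ring

theorem hasDerivAt_integralA3_py :
    HasDerivAt (integralA3 k2 k3 x y px ·) (2 * (x * py - y * px) * x) py := by
  convert hasDerivAt_quadratic (x^2) (-2 * x * y * px) (y^2 * px^2 + 2 * k2 * (y/x)^2
    + 2 * k3 * (x/y)^2) py using 1
  · funext t; unfold integralA3; ring
  · ring

end PartialDerivatives

theorem stmt_3 (k1 k2 k3 : ℝ) (x y px py : ℝ) (hx : x ≠ 0) (hy : y ≠ 0) :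
    pb (fun x y px py =>
          (1/2)*(px^2 + py^2) + (1/2)*k1*(x^2+y^2) + k2/x^2 + k3/y^2)
       (fun x y px py =>
          (x*py - y*px)^2 + 2*k2*(y/x)^2 + 2*k3*(x/y)^2)
       x y px py = 0 := by
  change pb (hamiltonianA k1 k2 k3) (integralA3 k2 k3) x y px py = 0
  rw [pb_eq_of_hasDerivAt (hasDerivAt_hamiltonianA_x k1 k2 k3 x y px py hx)
    (hasDerivAt_hamiltonianA_y k1 k2 k3 x y px py hy) (hasDerivAt_hamiltonianA_px k1 k2 k3 x y px py)
    (hasDerivAt_hamiltonianA_py k1 k2 k3 x y px py) (hasDerivAt_integralA3_x k2 k3 x y px py hx)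
    (hasDerivAt_integralA3_y k2 k3 x y px py hy) (hasDerivAt_integralA3_px k2 k3 x y px py)
    (hasDerivAt_integralA3_py k2 k3 x y px py)]
  field_simp
  ring
end

section
/- The function I_{c3} = (x p_y − y p_x) p_y + k_1 x / √(x^2+y^2) + 2 k_2 x / y^2 + k_3 (2x^2+y^2)/(y^2 √(x^2+y^2)) Poisson-commutes with H_c = (1/2)(p_x^2+p_y^2) + k_1/√(x^2+y^2) + k_2/y^2 + k_3 x/(y^2 √(x^2+y^2)) on the set where y ≠ 0 (hence x^2+y^2 > 0). -/
open Real

theorem pb_eq_of_differentiableAt {H I : ℝ → ℝ → ℝ → ℝ → ℝ} {V W : ℝ → ℝ → ℝ}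
    (hH : ∀ x y px py, H x y px py = 1/2 * (px^2 + py^2) + V x y)
    (hI : ∀ x y px py, I x y px py = (x*py - y*px)*py + W x y) {x y px py : ℝ}
    (hVx : DifferentiableAt ℝ (fun t => V t y) x)
    (hVy : DifferentiableAt ℝ (fun t => V x t) y)
    (hWx : DifferentiableAt ℝ (fun t => W t y) x)
    (hWy : DifferentiableAt ℝ (fun t => W x t) y) :
    pb H I x y px py =
      py * (2*x * deriv (fun t => V x t) y - y * deriv (fun t => V t y) x
          - deriv (fun t => W x t) y)
        - px * (y * deriv (fun t => V x t) y + deriv (fun t => W t y) x) := by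
  obtain rfl : H = fun x y px py => 1/2 * (px^2 + py^2) + V x y := by funext; exact hH ..
  obtain rfl : I = fun x y px py => (x*py - y*px)*py + W x y := by funext; exact hI ..
  have hHx := hVx.hasDerivAt.const_add (1/2 * (px^2 + py^2))
  have hHy := hVy.hasDerivAt.const_add (1/2 * (px^2 + py^2))
  have hHpx : HasDerivAt (fun t => 1/2 * (t^2 + py^2) + V x y) px px := by
    simpa using (((hasDerivAt_pow 2 px).add_const (py^2)).const_mul (1/2 : ℝ)).add_const (V x y)
  have hHpy : HasDerivAt (fun t => 1/2 * (px^2 + t^2) + V x y) py py := by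
    simpa using (((hasDerivAt_pow 2 py).const_add (px^2)).const_mul (1/2 : ℝ)).add_const (V x y)
  have hIx : HasDerivAt (fun t => (t*py - y*px)*py + W t y)
      (py^2 + deriv (fun t => W t y) x) x :=
    ((((hasDerivAt_id x).mul_const py).sub_const (y*px)).mul_const py).add
      hWx.hasDerivAt |>.congr_deriv (by ring)
  have hIy : HasDerivAt (fun t => (x*py - t*px)*py + W x t)
      (-(px*py) + deriv (fun t => W x t) y) y :=
    ((((hasDerivAt_id y).mul_const px).const_sub (x*py)).mul_const py).add
      hWy.hasDerivAt |>.congr_deriv (by ring)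
  have hIpx : HasDerivAt (fun t => (x*py - y*t)*py + W x y) (-(y*py)) px :=
    ((((hasDerivAt_id px).const_mul y).const_sub (x*py)).mul_const py).add_const (W x y)
      |>.congr_deriv (by ring)
  have hIpy : HasDerivAt (fun t => (x*t - y*px)*t + W x y) (2*x*py - y*px) py :=
    ((((hasDerivAt_id py).const_mul x).sub_const (y*px)).mul (hasDerivAt_id py)).add_const
      (W x y) |>.congr_deriv (by simp only [id]; ring)
  rw [pb, hHx.deriv, hHy.deriv, hHpx.deriv, hHpy.deriv, hIx.deriv, hIy.deriv, hIpx.deriv,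
    hIpy.deriv]
  ring

theorem hasDerivAt_sqrt_sq_add_sq_left {x y : ℝ} (h : x^2 + y^2 ≠ 0) :
    HasDerivAt (fun t => √(t^2 + y^2)) (x / √(x^2 + y^2)) x := by
  refine ((hasDerivAt_pow 2 x).add_const (y^2)).sqrt h |>.congr_deriv ?_
  field_simp
  ring

theorem hasDerivAt_sqrt_sq_add_sq_right {x y : ℝ} (h : x^2 + y^2 ≠ 0) :
    HasDerivAt (fun t => √(x^2 + t^2)) (y / √(x^2 + y^2)) y := by
  simpa only [add_comm _ (x^2), add_comm (y^2)] using
    hasDerivAt_sqrt_sq_add_sq_left (x := y) (y := x) (by rwa [add_comm])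

theorem sqrt_pow_add_two {a : ℝ} (ha : 0 ≤ a) (n : ℕ) : √a ^ (n + 2) = a * √a ^ n := by
  rw [pow_add, Real.sq_sqrt ha, mul_comm]

noncomputable def hamiltonianPotential (k1 k2 k3 x y : ℝ) : ℝ :=
  k1 / √(x^2 + y^2) + k2 / y^2 + k3 * x / (y^2 * √(x^2 + y^2))

noncomputable def integralPotential (k1 k2 k3 x y : ℝ) : ℝ :=
  k1 * x / √(x^2 + y^2) + 2 * k2 * x / y^2 + k3 * (2 * x^2 + y^2) / (y^2 * √(x^2 + y^2))

section Partials

variable (k1 k2 k3 : ℝ) {x y : ℝ} (hy : y ≠ 0)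
include hy

theorem hasDerivAt_hamiltonianPotential_fst :
    HasDerivAt (fun t => hamiltonianPotential k1 k2 k3 t y)
      ((k3 - k1 * x) / √(x^2 + y^2)^3) x := by
  have hr : 0 < x^2 + y^2 := by positivity
  have hs := hasDerivAt_sqrt_sq_add_sq_left hr.ne'
  have : √(x^2 + y^2) ≠ 0 := by positivity
  refine (((hasDerivAt_const x k1).div hs this).add_const (k2 / y^2)).add
    (((hasDerivAt_id x).const_mul k3).div (hs.const_mul (y^2)) (by positivity)) |>.congr_deriv ?_
  simp only [id]
  field_simp
  simp only [sqrt_pow_add_two hr.le, pow_zero]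
  ring

theorem hasDerivAt_hamiltonianPotential_snd :
    HasDerivAt (fun t => hamiltonianPotential k1 k2 k3 x t)
      (-k1 * y / √(x^2 + y^2)^3 - 2 * k2 / y^3
        - k3 * x * (2 * x^2 + 3 * y^2) / (y^3 * √(x^2 + y^2)^3)) y := by
  have hr : 0 < x^2 + y^2 := by positivity
  have hs := hasDerivAt_sqrt_sq_add_sq_right hr.ne'
  have : √(x^2 + y^2) ≠ 0 := by positivity
  have hy2 : HasDerivAt (fun t => t^2) (2 * y) y := by simpa using hasDerivAt_pow 2 y
  refine (((hasDerivAt_const y k1).div hs this).add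
    ((hasDerivAt_const y k2).div hy2 (by positivity))).add
    ((hasDerivAt_const y (k3 * x)).div (hy2.mul hs) (mul_ne_zero (by positivity) this))
    |>.congr_deriv ?_
  simp only [Pi.mul_apply]
  field_simp
  simp only [sqrt_pow_add_two hr.le, pow_zero, pow_one]
  ring

theorem hasDerivAt_integralPotential_fst :
    HasDerivAt (fun t => integralPotential k1 k2 k3 t y)
      (k1 * y^2 / √(x^2 + y^2)^3 + 2 * k2 / y^2
        + k3 * x * (2 * x^2 + 3 * y^2) / (y^2 * √(x^2 + y^2)^3)) x := by
  have hr : 0 < x^2 + y^2 := by positivity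
  have hs := hasDerivAt_sqrt_sq_add_sq_left hr.ne'
  have : √(x^2 + y^2) ≠ 0 := by positivity
  have hx2 : HasDerivAt (fun t => 2 * t^2 + y^2) (4 * x) x := by
    simpa using ((hasDerivAt_pow 2 x).const_mul 2).add_const (y^2) |>.congr_deriv (by ring)
  refine ((((hasDerivAt_id x).const_mul k1).div hs this).add
    (((hasDerivAt_id x).const_mul (2 * k2)).div_const (y^2))).add
    ((hx2.const_mul k3).div (hs.const_mul (y^2)) (by positivity)) |>.congr_deriv ?_
  simp only [id]
  field_simp
  simp only [sqrt_pow_add_two hr.le, pow_zero, pow_one]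
  ring

theorem hasDerivAt_integralPotential_snd :
    HasDerivAt (fun t => integralPotential k1 k2 k3 x t)
      (-k1 * x * y / √(x^2 + y^2)^3 - 4 * k2 * x / y^3
        - k3 * (4 * x^4 + 6 * x^2 * y^2 + y^4) / (y^3 * √(x^2 + y^2)^3)) y := by
  have hr : 0 < x^2 + y^2 := by positivity
  have hs := hasDerivAt_sqrt_sq_add_sq_right hr.ne'
  have : √(x^2 + y^2) ≠ 0 := by positivity
  have hy2 : HasDerivAt (fun t => t^2) (2 * y) y := by simpa using hasDerivAt_pow 2 y
  refine (((hasDerivAt_const y (k1 * x)).div hs this).add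
    ((hasDerivAt_const y (2 * k2 * x)).div hy2 (by positivity))).add
    (((hy2.const_add (2 * x^2)).const_mul k3).div (hy2.mul hs) (mul_ne_zero (by positivity) this))
    |>.congr_deriv ?_
  simp only [Pi.mul_apply]
  field_simp
  simp only [sqrt_pow_add_two hr.le, pow_zero, pow_one]
  ring

theorem deriv_integralPotential_fst :
    deriv (fun t => integralPotential k1 k2 k3 t y) x
      = -y * deriv (fun t => hamiltonianPotential k1 k2 k3 x t) y := by
  rw [(hasDerivAt_integralPotential_fst k1 k2 k3 hy).deriv,
    (hasDerivAt_hamiltonianPotential_snd k1 k2 k3 hy).deriv]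
  field_simp
  ring

theorem deriv_integralPotential_snd :
    deriv (fun t => integralPotential k1 k2 k3 x t) y
      = 2 * x * deriv (fun t => hamiltonianPotential k1 k2 k3 x t) y
        - y * deriv (fun t => hamiltonianPotential k1 k2 k3 t y) x := by
  rw [(hasDerivAt_integralPotential_snd k1 k2 k3 hy).deriv,
    (hasDerivAt_hamiltonianPotential_snd k1 k2 k3 hy).deriv,
    (hasDerivAt_hamiltonianPotential_fst k1 k2 k3 hy).deriv]
  field_simp
  ring

end Partials

theorem stmt_5 (k1 k2 k3 : ℝ) (x y px py : ℝ) (hy : y ≠ 0) :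
    pb (fun x y px py =>
          (1/2)*(px^2 + py^2) + k1/Real.sqrt (x^2+y^2) + k2/y^2
            + k3*x/(y^2 * Real.sqrt (x^2+y^2)))
       (fun x y px py =>
          (x*py - y*px)*py + k1*x/Real.sqrt (x^2+y^2) + 2*k2*x/y^2
            + k3*(2*x^2+y^2)/(y^2 * Real.sqrt (x^2+y^2)))
       x y px py = 0 := by
  rw [pb_eq_of_differentiableAt (V := hamiltonianPotential k1 k2 k3)
      (W := integralPotential k1 k2 k3)
      (fun _ _ _ _ => by simp only [hamiltonianPotential]; ring)
      (fun _ _ _ _ => by simp only [integralPotential]; ring)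
      (hasDerivAt_hamiltonianPotential_fst k1 k2 k3 hy).differentiableAt
      (hasDerivAt_hamiltonianPotential_snd k1 k2 k3 hy).differentiableAt
      (hasDerivAt_integralPotential_fst k1 k2 k3 hy).differentiableAt
      (hasDerivAt_integralPotential_snd k1 k2 k3 hy).differentiableAt,
    deriv_integralPotential_fst k1 k2 k3 hy, deriv_integralPotential_snd k1 k2 k3 hy]
  ring
end
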